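/- Beth definability from interpolation for PDL: Assume PDL has the Craig interpolation property. Then PDL has the Beth definability property: for any formula φ(p) implicitly defining p (i.e., φ(p₀), φ(p₁) ⊨ p₀ ↔ p₁ for fresh atoms p₀, p₁ not in the vocabulary of φ), there exists a formula ψ with vocabulary contained in voc(φ)∖{p} such that φ(p) ⊨ p ↔ ψ. -/

import Mathlib

mutual
inductive Formula : Type
  | bot : Formula
  | atom : ℕ → Formula
  | and : Formula → Formula → Formula
  | neg : Formula → Formula
  | box : Program → Formula → Formula
inductive Program : Type
  | atom : ℕ → Program
  | test : Formula → Program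
  | union : Program → Program → Program
  | comp : Program → Program → Program
  | star : Program → Program
end

structure KripkeModel (W : Type) : Type where
  rel : ℕ → W → W → Prop
  val : W → ℕ → Prop

mutual
def evaluate {W : Type} (M : KripkeModel W) : W → Formula → Prop
  | _, .bot => False
  | w, .atom p => M.val w p
  | w, .and φ ψ => evaluate M w φ ∧ evaluate M w ψ
  | w, .neg φ => ¬ evaluate M w φ
  | w, .box α φ => ∀ v, relate M α w v → evaluate M v φ
def relate {W : Type} (M : KripkeModel W) : Program → W → W → Prop
  | .atom a, w, v => M.rel a w v
  | .test τ, w, v => w = v ∧ evaluate M w τ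
  | .union α β, w, v => relate M α w v ∨ relate M β w v
  | .comp α β, w, v => ∃ u, relate M α w u ∧ relate M β u v
  | .star α, w, v => Relation.ReflTransGen (fun x y => relate M α x y) w v
end

/-- Relation interpreting a list of programs: composition, identity for `[]`. -/
def relateSeq {W : Type} (M : KripkeModel W) : List Program → W → W → Prop
  | [], v, w => v = w
  | α :: δ, v, w => ∃ u, relate M α v u ∧ relateSeq M δ u w

/-- Implication, defined from ¬ and ∧. -/
def Formula.imp (φ ψ : Formula) : Formula := .neg (.and φ (.neg ψ))

/-- Disjunction, defined from ¬ and ∧. -/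
def Formula.disj (φ ψ : Formula) : Formula := .neg (.and (.neg φ) (.neg ψ))

def semImplies (φ ψ : Formula) : Prop :=
  ∀ (W : Type) (M : KripkeModel W) (w : W), evaluate M w φ → evaluate M w ψ

def semEquiv (φ ψ : Formula) : Prop :=
  ∀ (W : Type) (M : KripkeModel W) (w : W), evaluate M w φ ↔ evaluate M w ψ

def valid (φ : Formula) : Prop :=
  ∀ (W : Type) (M : KripkeModel W) (w : W), evaluate M w φ

mutual
/-- Uniform substitution on formulas. -/
def substF (σ : ℕ → Formula) : Formula → Formula
  | .bot => .bot
  | .atom p => σ p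
  | .and φ ψ => .and (substF σ φ) (substF σ ψ)
  | .neg φ => .neg (substF σ φ)
  | .box α φ => .box (substP σ α) (substF σ φ)
/-- Uniform substitution on programs. -/
def substP (σ : ℕ → Formula) : Program → Program
  | .atom a => .atom a
  | .test τ => .test (substF σ τ)
  | .union α β => .union (substP σ α) (substP σ β)
  | .comp α β => .comp (substP σ α) (substP σ β)
  | .star α => .star (substP σ α)
end

/-- The substitution ρ/x mapping x to ρ and all other atoms to themselves. -/
def substOne (x : ℕ) (ρ : Formula) : ℕ → Formula := fun p => if p = x then ρ else .atom p

mutual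
/-- Occurrence of an atomic proposition in a formula. -/
def occursF (x : ℕ) : Formula → Prop
  | .bot => False
  | .atom p => p = x
  | .and φ ψ => occursF x φ ∨ occursF x ψ
  | .neg φ => occursF x φ
  | .box α φ => occursP x α ∨ occursF x φ
/-- Occurrence of an atomic proposition in a program (including inside tests). -/
def occursP (x : ℕ) : Program → Prop
  | .atom _ => False
  | .test τ => occursF x τ
  | .union α β => occursP x α ∨ occursP x β
  | .comp α β => occursP x α ∨ occursP x β
  | .star α => occursP x α
end

mutual
/-- Vocabulary of a formula: atomic propositions (inl) and atomic programs (inr). -/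
def vocF : Formula → Set (ℕ ⊕ ℕ)
  | .bot => ∅
  | .atom p => {Sum.inl p}
  | .and φ ψ => vocF φ ∪ vocF ψ
  | .neg φ => vocF φ
  | .box α φ => vocP α ∪ vocF φ
def vocP : Program → Set (ℕ ⊕ ℕ)
  | .atom a => {Sum.inr a}
  | .test τ => vocF τ
  | .union α β => vocP α ∪ vocP β
  | .comp α β => vocP α ∪ vocP β
  | .star α => vocP α
end

/-- Shallow tests of a program. -/
def TestsOf : Program → Set Formula
  | .atom _ => ∅
  | .test τ => {τ}
  | .union α β => TestsOf α ∪ TestsOf β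
  | .comp α β => TestsOf α ∪ TestsOf β
  | .star α => TestsOf α

/-- Shallow subprograms of a program. -/
def ProgsOf : Program → Set Program
  | .atom a => {.atom a}
  | .test τ => {.test τ}
  | .union α β => {.union α β} ∪ ProgsOf α ∪ ProgsOf β
  | .comp α β => {.comp α β} ∪ ProgsOf α ∪ ProgsOf β
  | .star α => {.star α} ∪ ProgsOf α

/-- Iterated boxes: □(δ̄, φ) = [δ₁]…[δₙ]φ. -/
def boxes : List Program → Formula → Formula
  | [], φ => φ
  | α :: δ, φ => .box α (boxes δ φ)

/-- Test profiles of a program: subsets of its shallow tests. -/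
def TP (α : Program) : Set (Set Formula) := {ℓ | ℓ ⊆ TestsOf α}

/-- The sets of program lists P^ℓ. -/
def Pfun (ℓ : Set Formula) : Program → Set (List Program)
  | .atom a => {[.atom a]}
  | .test τ => {l | l = [] ∧ τ ∈ ℓ}
  | .union α β => Pfun ℓ α ∪ Pfun ℓ β
  | .comp α β => {l | ∃ δ ∈ Pfun ℓ α, δ ≠ [] ∧ l = δ ++ [β]} ∪ {l | l ∈ Pfun ℓ β ∧ [] ∈ Pfun ℓ α}
  | .star α => {[]} ∪ {l | ∃ δ ∈ Pfun ℓ α, δ ≠ [] ∧ l = δ ++ [.star α]}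

/-- F^ℓ(α): negations of the failed tests. -/
def Ffun (ℓ : Set Formula) (α : Program) : Set Formula :=
  {φ | ∃ τ, τ ∈ TestsOf α ∧ τ ∉ ℓ ∧ φ = Formula.neg τ}

/-- X^ℓ_{α,ψ}. -/
def Xset (ℓ : Set Formula) (α : Program) (ψ : Formula) : Set Formula :=
  Ffun ℓ α ∪ {φ | ∃ δ ∈ Pfun ℓ α, φ = boxes δ ψ}

/-- unfold_□(α, ψ). -/
def unfoldBox (α : Program) (ψ : Formula) : Set (Set Formula) :=
  {Γ | ∃ ℓ ∈ TP α, Γ = Xset ℓ α ψ}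

/-- The function H for diamond unfolding. -/
def Hfun : Program → Set (Set Formula × List Program)
  | .atom a => {(∅, [.atom a])}
  | .test τ => {({τ}, [])}
  | .union α β => Hfun α ∪ Hfun β
  | .comp α β =>
      {p | (∃ X δ, (X, δ) ∈ Hfun α ∧ δ ≠ [] ∧ p = (X, δ ++ [β])) ∨
           (∃ X Y δ, (X, ([] : List Program)) ∈ Hfun α ∧ (Y, δ) ∈ Hfun β ∧ p = (X ∪ Y, δ))}
  | .star α =>
      insert (∅, ([] : List Program))
        {p | ∃ X δ, (X, δ) ∈ Hfun α ∧ δ ≠ [] ∧ p = (X, δ ++ [Program.star α])}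

/-- unfold_◇(α, ψ). -/
def unfoldDiamond (α : Program) (ψ : Formula) : Set (Set Formula) :=
  {Γ | ∃ p ∈ Hfun α, Γ = p.1 ∪ {Formula.neg (boxes p.2 ψ)}}

/-- Saturated sets of formulas. -/
def Saturated (Y : Set Formula) : Prop :=
  (∀ φ, Formula.neg (.neg φ) ∈ Y → φ ∈ Y) ∧
  (∀ φ ψ, Formula.and φ ψ ∈ Y → φ ∈ Y ∧ ψ ∈ Y) ∧
  (∀ φ ψ, Formula.neg (.and φ ψ) ∈ Y → Formula.neg φ ∈ Y ∨ Formula.neg ψ ∈ Y) ∧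
  (∀ α φ, Formula.box α φ ∈ Y → ∃ Δ ∈ unfoldBox α φ, Δ ⊆ Y) ∧
  (∀ α φ, Formula.neg (.box α φ) ∈ Y → ∃ Δ ∈ unfoldDiamond α φ, Δ ⊆ Y)

/-- Single negation. -/
def snegg : Formula → Formula
  | .neg φ => φ
  | φ => .neg φ

mutual
/-- Subformulas of a formula. -/
def subfF : Formula → Set Formula
  | .bot => {.bot}
  | .atom p => {.atom p}
  | .and φ ψ => {.and φ ψ} ∪ subfF φ ∪ subfF ψ
  | .neg φ => {.neg φ} ∪ subfF φ
  | .box α φ => {.box α φ} ∪ subfP α ∪ subfF φ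
/-- Formulas occurring in a program. -/
def subfP : Program → Set Formula
  | .atom _ => ∅
  | .test τ => subfF τ
  | .union α β => subfP α ∪ subfP β
  | .comp α β => subfP α ∪ subfP β
  | .star α => subfP α
end

/-- Fischer-Ladner closed sets. -/
def FLclosed (S : Set Formula) : Prop :=
  (∀ φ ∈ S, snegg φ ∈ S) ∧
  (∀ φ ∈ S, subfF φ ⊆ S) ∧
  (∀ α β φ, Formula.box (.union α β) φ ∈ S → Formula.box α φ ∈ S ∧ Formula.box β φ ∈ S) ∧
  (∀ α β φ, Formula.box (.comp α β) φ ∈ S → Formula.box α (.box β φ) ∈ S) ∧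
  (∀ α φ, Formula.box (.star α) φ ∈ S → Formula.box α (.box (.star α) φ) ∈ S)

/-- Fischer-Ladner closure: the smallest Fischer-Ladner closed superset. -/
def FL (X : Set Formula) : Set Formula := {φ | ∀ S, X ⊆ S → FLclosed S → φ ∈ S}

mutual
def lenF : Formula → ℕ
  | .bot => 1
  | .atom _ => 1
  | .and φ ψ => 1 + lenF φ + lenF ψ
  | .neg φ => 1 + lenF φ
  | .box α φ => 1 + lenP α + lenF φ
/-- Length (size) of a program. -/
def lenP : Program → ℕ
  | .atom _ => 1
  | .test τ => 1 + lenF τ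
  | .union α β => 1 + lenP α + lenP β
  | .comp α β => 1 + lenP α + lenP β
  | .star α => 1 + lenP α
end

/-- Sum of distances along a list of states (consecutive pairs). -/
noncomputable def listSum {W : Type} (d : W → W → ℕ∞) : List W → ℕ∞
  | [] => 0
  | [_] => 0
  | a :: b :: rest => d a b + listSum d (b :: rest)

open Classical in
/-- The α-distance between states. -/
noncomputable def distance {W : Type} (M : KripkeModel W) : Program → W → W → ℕ∞
  | .atom a, v, w => if M.rel a v w then 1 else ⊤
  | .test τ, v, w => if v = w ∧ evaluate M v τ then 0 else ⊤
  | .union α β, v, w => min (distance M α v w) (distance M β v w)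
  | .comp α β, v, w => ⨅ u, distance M α v u + distance M β u w
  | .star α, v, w =>
      ⨅ (l : List W) (_ : l.head? = some v ∧ l.getLast? = some w),
        listSum (fun x y => distance M α x y) l

open Classical in
/-- Distance along a list of programs. -/
noncomputable def distanceSeq {W : Type} (M : KripkeModel W) : List Program → W → W → ℕ∞
  | [], v, w => if v = w then 0 else ⊤
  | α :: δ, v, w => ⨅ u, distance M α v u + distanceSeq M δ u w

/-- The relation Q_α on a type of "states" S carrying formula membership `mem`. -/
def Qprog {S : Type} (mem : Formula → S → Prop) (R : ℕ → S → S → Prop) : Program → S → S → Prop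
  | .atom a => R a
  | .test τ => fun X Y => X = Y ∧ mem τ X
  | .union α β => fun X Y => Qprog mem R α X Y ∨ Qprog mem R β X Y
  | .comp α β => fun X Y => ∃ U, Qprog mem R α X U ∧ Qprog mem R β U Y
  | .star α => Relation.ReflTransGen (fun X Y => Qprog mem R α X Y)

/-- Q along a list of programs, with Id_W (restricted identity) for the empty list. -/
def Qseq {S : Type} (mem : Formula → S → Prop) (R : ℕ → S → S → Prop) (Wset : Set S) :
    List Program → S → S → Prop
  | [] => fun Y Z => Y = Z ∧ Y ∈ Wset
  | α :: δ => fun Y Z => ∃ U, Qprog mem R α Y U ∧ Qseq mem R Wset δ U Z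

/-- A model graph: a Kripke model whose states are locally consistent saturated sets. -/
structure ModelGraph (Wset : Set (Set Formula)) : Type where
  R : ℕ → ↥Wset → ↥Wset → Prop
  saturated : ∀ X : ↥Wset, Saturated X.val
  noBot : ∀ X : ↥Wset, Formula.bot ∉ X.val
  consistent : ∀ (X : ↥Wset) (p : ℕ),
    Formula.atom p ∈ X.val → Formula.neg (Formula.atom p) ∉ X.val
  boxCond : ∀ (X Y : ↥Wset) (a : ℕ) (φ : Formula),
    R a X Y → Formula.box (.atom a) φ ∈ X.val → φ ∈ Y.val
  diaCond : ∀ (X : ↥Wset) (α : Program) (φ : Formula),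
    Formula.neg (.box α φ) ∈ X.val →
      ∃ Y : ↥Wset, Qprog (fun τ Z => τ ∈ Z.val) R α X Y ∧ Formula.neg φ ∈ Y.val

/-- The Kripke model of a model graph; valuation: p holds at X iff p ∈ X. -/
def mgModel {Wset : Set (Set Formula)} (G : ModelGraph Wset) : KripkeModel ↥Wset :=
  ⟨G.R, fun X p => Formula.atom p ∈ X.val⟩

/-- Substituting atom q for atom p uniformly. -/
def substAtom (p q : ℕ) (φ : Formula) : Formula :=
  substF (fun r => if r = p then Formula.atom q else Formula.atom r) φ

/-! Take fresh distinct atoms p₀, p₁. Implicit definability says that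
φ(p₀) ∧ p₀ → (φ(p₁) → p₁) is valid; an interpolant θ of it mentions neither p₀ nor p₁,
nor p. Since p₀ and p₁ are fresh, re-reading p₀ (resp. p₁) as p turns φ(p₀) (resp. φ(p₁))
back into φ and leaves θ unchanged, so the two halves of the interpolation give
φ ⊨ p → θ and φ ⊨ θ → p. -/

def KripkeModel.comapVal {W : Type} (M : KripkeModel W) (f : ℕ → ℕ) : KripkeModel W :=
  ⟨M.rel, fun w r => M.val w (f r)⟩

theorem evaluate_imp {W : Type} (M : KripkeModel W) (w : W) (φ ψ : Formula) :
    evaluate M w (φ.imp ψ) ↔ (evaluate M w φ → evaluate M w ψ) := by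
  simp only [Formula.imp, evaluate]
  tauto

theorem vocF_imp (φ ψ : Formula) : vocF (φ.imp ψ) = vocF φ ∪ vocF ψ := by
  simp only [Formula.imp, vocF]

mutual
theorem vocF_finite : ∀ χ : Formula, (vocF χ).Finite
  | .bot => Set.finite_empty
  | .atom _ => Set.finite_singleton _
  | .and φ ψ => (vocF_finite φ).union (vocF_finite ψ)
  | .neg φ => vocF_finite φ
  | .box α φ => (vocP_finite α).union (vocF_finite φ)
theorem vocP_finite : ∀ α : Program, (vocP α).Finite
  | .atom _ => Set.finite_singleton _
  | .test τ => vocF_finite τ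
  | .union α β => (vocP_finite α).union (vocP_finite β)
  | .comp α β => (vocP_finite α).union (vocP_finite β)
  | .star α => vocP_finite α
end

theorem insert_inter_insert_subset {α : Type*} {a b : α} (hab : a ≠ b) (t : Set α) :
    insert a t ∩ insert b t ⊆ t := by
  rintro x ⟨rfl | hx, hxb | hx'⟩
  exacts [absurd hxb hab, hx', hx, hx]

theorem exists_fresh_atoms (φ : Formula) :
    ∃ p₀ p₁ : ℕ, Sum.inl p₀ ∉ vocF φ ∧ Sum.inl p₁ ∉ vocF φ ∧ p₀ ≠ p₁ := by
  have hfin : (Sum.inl ⁻¹' vocF φ : Set ℕ).Finite :=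
    (vocF_finite φ).preimage Sum.inl_injective.injOn
  obtain ⟨p₀, hp₀⟩ := hfin.exists_notMem
  obtain ⟨p₁, hp₁⟩ := (hfin.insert p₀).exists_notMem
  exact ⟨p₀, p₁, hp₀, fun h => hp₁ (Or.inr h), fun h => hp₁ (Or.inl h.symm)⟩

mutual
theorem evaluate_comapVal_of_forall_eq {W : Type} (M : KripkeModel W) (f : ℕ → ℕ) :
    ∀ χ : Formula, (∀ r, Sum.inl r ∈ vocF χ → f r = r) →
      ∀ w, evaluate (M.comapVal f) w χ ↔ evaluate M w χ
  | .bot, _, _ => Iff.rfl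
  | .atom r, hf, w => by simp [evaluate, KripkeModel.comapVal, hf r (by simp [vocF])]
  | .and φ ψ, hf, w => by
      simp only [vocF, Set.mem_union] at hf
      simp only [evaluate]
      exact and_congr (evaluate_comapVal_of_forall_eq M f φ (fun r h => hf r (.inl h)) w)
        (evaluate_comapVal_of_forall_eq M f ψ (fun r h => hf r (.inr h)) w)
  | .neg φ, hf, w => not_congr (evaluate_comapVal_of_forall_eq M f φ hf w)
  | .box α φ, hf, w => by
      simp only [vocF, Set.mem_union] at hf
      simp only [evaluate]
      exact forall_congr' fun v => imp_congr
        (relate_comapVal_of_forall_eq M f α (fun r h => hf r (.inl h)) w v)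
        (evaluate_comapVal_of_forall_eq M f φ (fun r h => hf r (.inr h)) v)
theorem relate_comapVal_of_forall_eq {W : Type} (M : KripkeModel W) (f : ℕ → ℕ) :
    ∀ α : Program, (∀ r, Sum.inl r ∈ vocP α → f r = r) →
      ∀ v w, relate (M.comapVal f) α v w ↔ relate M α v w
  | .atom _, _, _, _ => Iff.rfl
  | .test τ, hf, v, _ => and_congr Iff.rfl (evaluate_comapVal_of_forall_eq M f τ hf v)
  | .union α β, hf, v, w => by
      simp only [vocP, Set.mem_union] at hf
      exact or_congr (relate_comapVal_of_forall_eq M f α (fun r h => hf r (.inl h)) v w)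
        (relate_comapVal_of_forall_eq M f β (fun r h => hf r (.inr h)) v w)
  | .comp α β, hf, v, w => by
      simp only [vocP, Set.mem_union] at hf
      exact exists_congr fun u => and_congr
        (relate_comapVal_of_forall_eq M f α (fun r h => hf r (.inl h)) v u)
        (relate_comapVal_of_forall_eq M f β (fun r h => hf r (.inr h)) u w)
  | .star α, hf, v, w => by
      have hα : (relate (M.comapVal f) α) = relate M α := by
        funext x y
        exact propext (relate_comapVal_of_forall_eq M f α hf x y)
      simp only [relate, hα]
end

mutual
theorem evaluate_substF_atom_comp {W : Type} (M : KripkeModel W) (f : ℕ → ℕ) :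
    ∀ (χ : Formula) (w : W),
      evaluate M w (substF (Formula.atom ∘ f) χ) ↔ evaluate (M.comapVal f) w χ
  | .bot, _ => Iff.rfl
  | .atom _, _ => Iff.rfl
  | .and φ ψ, w =>
      and_congr (evaluate_substF_atom_comp M f φ w) (evaluate_substF_atom_comp M f ψ w)
  | .neg φ, w => not_congr (evaluate_substF_atom_comp M f φ w)
  | .box α φ, w => forall_congr' fun v =>
      imp_congr (relate_substP_atom_comp M f α w v) (evaluate_substF_atom_comp M f φ v)
theorem relate_substP_atom_comp {W : Type} (M : KripkeModel W) (f : ℕ → ℕ) :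
    ∀ (α : Program) (v w : W),
      relate M (substP (Formula.atom ∘ f) α) v w ↔ relate (M.comapVal f) α v w
  | .atom _, _, _ => Iff.rfl
  | .test τ, v, _ => and_congr Iff.rfl (evaluate_substF_atom_comp M f τ v)
  | .union α β, v, w =>
      or_congr (relate_substP_atom_comp M f α v w) (relate_substP_atom_comp M f β v w)
  | .comp α β, v, w => exists_congr fun u =>
      and_congr (relate_substP_atom_comp M f α v u) (relate_substP_atom_comp M f β u w)
  | .star α, v, w => by
      have hα : relate M (substP (Formula.atom ∘ f) α) = relate (M.comapVal f) α := by
        funext x y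
        exact propext (relate_substP_atom_comp M f α x y)
      simp only [substP, relate, hα]
end

mutual
theorem vocF_substF_atom_comp_subset (f : ℕ → ℕ) :
    ∀ χ : Formula, vocF (substF (Formula.atom ∘ f) χ) ⊆ Sum.map f id '' vocF χ
  | .bot => by simp [substF, vocF]
  | .atom _ => by simp [substF, vocF]
  | .and φ ψ => by
      simp only [substF, vocF, Set.image_union]
      exact Set.union_subset_union (vocF_substF_atom_comp_subset f φ)
        (vocF_substF_atom_comp_subset f ψ)
  | .neg φ => vocF_substF_atom_comp_subset f φ
  | .box α φ => by
      simp only [substF, vocF, Set.image_union]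
      exact Set.union_subset_union (vocP_substP_atom_comp_subset f α)
        (vocF_substF_atom_comp_subset f φ)
theorem vocP_substP_atom_comp_subset (f : ℕ → ℕ) :
    ∀ α : Program, vocP (substP (Formula.atom ∘ f) α) ⊆ Sum.map f id '' vocP α
  | .atom _ => by simp [substP, vocP]
  | .test τ => vocF_substF_atom_comp_subset f τ
  | .union α β | .comp α β => by
      simp only [substP, vocP, Set.image_union]
      exact Set.union_subset_union (vocP_substP_atom_comp_subset f α)
        (vocP_substP_atom_comp_subset f β)
  | .star α => vocP_substP_atom_comp_subset f α
end

theorem substAtom_eq_substF (p q : ℕ) (χ : Formula) :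
    substAtom p q χ = substF (Formula.atom ∘ Function.update id p q) χ := by
  unfold substAtom
  congr 1
  funext r
  by_cases hr : r = p <;> simp [hr]

theorem vocF_substAtom_subset (p q : ℕ) (χ : Formula) :
    vocF (substAtom p q χ) ⊆ insert (Sum.inl q) (vocF χ \ {Sum.inl p}) := by
  rw [substAtom_eq_substF]
  refine (vocF_substF_atom_comp_subset _ χ).trans ?_
  rintro _ ⟨x | a, hx, rfl⟩
  · by_cases hxp : x = p
    · simp [hxp]
    · simp [hxp, hx]
  · simp [hx]

theorem vocF_subset_of_subset_inter_substAtom {θ φ : Formula} {p p₀ p₁ : ℕ} (hne : p₀ ≠ p₁)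
    (hθ : vocF θ ⊆ vocF ((substAtom p p₀ φ).and (.atom p₀)) ∩
      vocF ((substAtom p p₁ φ).imp (.atom p₁))) :
    vocF θ ⊆ vocF φ \ {Sum.inl p} := by
  have h₀ : vocF ((substAtom p p₀ φ).and (.atom p₀)) ⊆
      insert (Sum.inl p₀) (vocF φ \ {Sum.inl p}) :=
    Set.union_subset (vocF_substAtom_subset p p₀ φ) (by simp [vocF])
  have h₁ : vocF ((substAtom p p₁ φ).imp (.atom p₁)) ⊆
      insert (Sum.inl p₁) (vocF φ \ {Sum.inl p}) := by
    rw [vocF_imp]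
    exact Set.union_subset (vocF_substAtom_subset p p₁ φ) (by simp [vocF])
  exact (hθ.trans (Set.inter_subset_inter h₀ h₁)).trans
    (insert_inter_insert_subset (Sum.inl_injective.ne hne) _)

theorem evaluate_comapVal_update_of_notMem {W : Type} (M : KripkeModel W) {q : ℕ}
    {χ : Formula} (hq : Sum.inl q ∉ vocF χ) (p : ℕ) (w : W) :
    evaluate (M.comapVal (Function.update id q p)) w χ ↔ evaluate M w χ :=
  evaluate_comapVal_of_forall_eq M _ χ
    (fun r hr => Function.update_of_ne (by rintro rfl; exact hq hr) _ _) w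

theorem evaluate_comapVal_update_substAtom {W : Type} (M : KripkeModel W) {q : ℕ}
    {χ : Formula} (hq : Sum.inl q ∉ vocF χ) (p : ℕ) (w : W) :
    evaluate (M.comapVal (Function.update id q p)) w (substAtom p q χ) ↔ evaluate M w χ := by
  rw [substAtom_eq_substF, evaluate_substF_atom_comp]
  refine evaluate_comapVal_of_forall_eq M _ χ (fun r hr => ?_) w
  by_cases hrp : r = p
  · simp [hrp]
  · have hrq : r ≠ q := fun h => hq (h ▸ hr)
    simp [hrp, hrq]

theorem evaluate_comapVal_update_atom {W : Type} (M : KripkeModel W) (q p : ℕ) (w : W) :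
    evaluate (M.comapVal (Function.update id q p)) w (.atom q) ↔ evaluate M w (.atom p) := by
  simp [evaluate, KripkeModel.comapVal]

/-- Beth definability from Craig interpolation for PDL. -/
theorem beth
    (hCIP : ∀ φ ψ : Formula, valid (φ.imp ψ) →
      ∃ θ, vocF θ ⊆ vocF φ ∩ vocF ψ ∧ valid (φ.imp θ) ∧ valid (θ.imp ψ)) :
    ∀ (φ : Formula) (p : ℕ),
      (∀ p₀ p₁ : ℕ, Sum.inl p₀ ∉ vocF φ → Sum.inl p₁ ∉ vocF φ →
        ∀ (W : Type) (M : KripkeModel W) (w : W),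
          evaluate M w (substAtom p p₀ φ) → evaluate M w (substAtom p p₁ φ) →
          (evaluate M w (Formula.atom p₀) ↔ evaluate M w (Formula.atom p₁))) →
      ∃ ψ : Formula, vocF ψ ⊆ vocF φ \ {Sum.inl p} ∧
        ∀ (W : Type) (M : KripkeModel W) (w : W),
          evaluate M w φ → (evaluate M w (Formula.atom p) ↔ evaluate M w ψ) := by
  intro φ p hImplicit
  obtain ⟨p₀, p₁, hp₀, hp₁, hne⟩ := exists_fresh_atoms φ
  set A := (substAtom p p₀ φ).and (.atom p₀)
  set B := (substAtom p p₁ φ).imp (.atom p₁)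
  have hAB : valid (A.imp B) := fun W M w => by
    simp only [A, B, evaluate_imp, evaluate]
    exact fun ⟨h₀, hp⟩ h₁ => (hImplicit p₀ p₁ hp₀ hp₁ W M w h₀ h₁).mp hp
  obtain ⟨θ, hvoc, hAθ, hθB⟩ := hCIP A B hAB
  have hθ : vocF θ ⊆ vocF φ \ {Sum.inl p} := vocF_subset_of_subset_inter_substAtom hne hvoc
  refine ⟨θ, hθ, fun W M w hφ => ⟨fun hp => ?_, fun hθw => ?_⟩⟩
  · let M₀ := M.comapVal (Function.update id p₀ p)
    have hAw : evaluate M₀ w A :=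
      ⟨(evaluate_comapVal_update_substAtom M hp₀ p w).mpr hφ,
        (evaluate_comapVal_update_atom M p₀ p w).mpr hp⟩
    have hθw : evaluate M₀ w θ := (evaluate_imp _ _ _ _).mp (hAθ W M₀ w) hAw
    exact (evaluate_comapVal_update_of_notMem M (fun h => hp₀ (hθ h).1) p w).mp hθw
  · let M₁ := M.comapVal (Function.update id p₁ p)
    have hθw₁ : evaluate M₁ w θ :=
      (evaluate_comapVal_update_of_notMem M (fun h => hp₁ (hθ h).1) p w).mpr hθw
    have hBw : evaluate M₁ w B := (evaluate_imp _ _ _ _).mp (hθB W M₁ w) hθw₁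
    have hp₁w : evaluate M₁ w (.atom p₁) :=
      (evaluate_imp _ _ _ _).mp hBw ((evaluate_comapVal_update_substAtom M hp₁ p w).mpr hφ)
    exact (evaluate_comapVal_update_atom M p₁ p w).mp hp₁w
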